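/- Let k ≥ 2 be an integer and let G be a finite graph. If G has a tree-decomposition in which every torso has at most k vertices of degree at least k (degree measured in the torso), then G has no (k+1)-block. -/

import Mathlib

open SimpleGraph

/-- `x` and `y` lie in the same component of `G - S`:
there is a walk from `x` to `y` in `G` avoiding `S`. -/
def ConnAvoiding {V : Type} (G : SimpleGraph V) (S : Set V) (x y : V) : Prop :=
  ∃ p : G.Walk x y, ∀ v ∈ p.support, v ∉ S

/-- `X` is a `(<k)`-inseparable set of vertices of `G`: it has at least `k` vertices and
no two of its vertices can be separated by deleting fewer than `k` vertices. -/
def IsInseparable {V : Type} (G : SimpleGraph V) (k : ℕ) (X : Set V) : Prop :=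
  k ≤ X.ncard ∧
  ∀ x ∈ X, ∀ y ∈ X, x ≠ y → ∀ S : Set V, S.ncard < k → x ∉ S → y ∉ S →
    ConnAvoiding G S x y

/-- `X` is a `k`-block of `G`: a maximal `(<k)`-inseparable set of vertices. -/
def IsBlock {V : Type} (G : SimpleGraph V) (k : ℕ) (X : Set V) : Prop :=
  IsInseparable G k X ∧ ∀ Y : Set V, IsInseparable G k Y → X ⊆ Y → Y = X

/-- The block number `β(G)`: the maximum `k` for which `G` contains a `k`-block. -/
noncomputable def blockNumber {V : Type} (G : SimpleGraph V) : ℕ :=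
  sSup {k : ℕ | ∃ X : Set V, IsBlock G k X}

/-- There is a `k`-fan from `v` to `U` in `G`: `k` paths starting at `v`, otherwise
disjoint, each ending in `U` (trivial paths allowed). -/
def IsFanTo {V : Type} (G : SimpleGraph V) (k : ℕ) (v : V) (U : Set V) : Prop :=
  ∃ (e : Fin k → V) (P : ∀ i : Fin k, G.Path v (e i)),
    (∀ i, e i ∈ U) ∧
    ∀ i j : Fin k, i ≠ j →
      ∀ w, w ∈ (P i).val.support → w ∈ (P j).val.support → w = v

/-- `X` is a `k`-fan-set: from every `x ∈ X` there is a `k`-fan to `X`. -/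
def IsFanSet {V : Type} (G : SimpleGraph V) (k : ℕ) (X : Set V) : Prop :=
  ∀ x ∈ X, IsFanTo G k x X

/-- The `∞`-admissibility of `G`: the maximum `k` for which `G` contains a nonempty
`k`-fan-set. -/
noncomputable def admInf {V : Type} (G : SimpleGraph V) : ℕ :=
  sSup {k : ℕ | ∃ X : Set V, X.Nonempty ∧ IsFanSet G k X}

/-- `C` is (the vertex set of) a connected component of the subgraph of `G` induced
on `A`: a maximal subset of `A` inducing a connected subgraph. -/
def IsCompOf {V : Type} (G : SimpleGraph V) (A C : Set V) : Prop :=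
  C ⊆ A ∧ (G.induce C).Connected ∧
  ∀ D : Set V, C ⊆ D → D ⊆ A → (G.induce D).Connected → D = C

/-- `H` is a minor of `G`, via disjoint nonempty connected branch sets. -/
def IsMinor {W V : Type} (H : SimpleGraph W) (G : SimpleGraph V) : Prop :=
  ∃ B : W → Set V,
    (∀ h, (B h).Nonempty) ∧
    (∀ h, (G.induce (B h)).Connected) ∧
    (∀ h h', h ≠ h' → Disjoint (B h) (B h')) ∧
    ∀ h h', H.Adj h h' → ∃ u ∈ B h, ∃ v ∈ B h', G.Adj u v

/-- `H` is a topological minor of `G`: there are branch vertices `φ u` and, for every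
edge `uv` of `H`, a path in `G` from `φ u` to `φ v`; distinct edge-paths meet only in
branch vertices (hence only in common endpoints), and internal vertices of the paths
are not branch vertices. -/
def IsTopMinor {W V : Type} (H : SimpleGraph W) (G : SimpleGraph V) : Prop :=
  ∃ (φ : W ↪ V) (P : ∀ u v : W, H.Adj u v → G.Path (φ u) (φ v)),
    (∀ u v (h : H.Adj u v) w, w ∈ (P u v h).val.support →
        w ∈ Set.range φ → w = φ u ∨ w = φ v) ∧
    (∀ u v (h : H.Adj u v) u' v' (h' : H.Adj u' v'), s(u, v) ≠ s(u', v') →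
        ∀ w, w ∈ (P u v h).val.support → w ∈ (P u' v' h').val.support →
          w ∈ Set.range φ)

/-- A tree-decomposition of `G` with tree on node type `T`. -/
structure TreeDecomp {V : Type} (G : SimpleGraph V) (T : Type) where
  tree : SimpleGraph T
  isTree : tree.IsTree
  part : T → Set V
  part_covers : ∀ v : V, ∃ t, v ∈ part t
  part_edge : ∀ ⦃u v : V⦄, G.Adj u v → ∃ t, u ∈ part t ∧ v ∈ part t
  part_path : ∀ (t₁ t₂ t₃ : T) (p : tree.Path t₁ t₃), t₂ ∈ p.val.support →
    part t₁ ∩ part t₃ ⊆ part t₂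

/-- `m` pairwise vertex-disjoint `A`–`B` paths in `G`. -/
def DisjPaths {V : Type} (G : SimpleGraph V) (m : ℕ) (A B : Set V) : Prop :=
  ∃ (a b : Fin m → V) (P : ∀ i : Fin m, G.Path (a i) (b i)),
    (∀ i, a i ∈ A) ∧ (∀ i, b i ∈ B) ∧
    ∀ i j : Fin m, i ≠ j → ∀ w, w ∈ (P i).val.support → w ∉ (P j).val.support

/-- `a` is lexicographically smaller than `b` as `(n+1)`-tuples `(a 0, …, a n)`. -/
def FatLexLT (n : ℕ) (a b : ℕ → ℕ) : Prop :=
  ∃ i ≤ n, (∀ j < i, a j = b j) ∧ a i < b i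

namespace TreeDecomp

variable {V T : Type} {G : SimpleGraph V}

/-- The tree-decomposition has adhesion less than `k`. -/
def AdhesionLT (D : TreeDecomp G T) (k : ℕ) : Prop :=
  ∀ ⦃s t : T⦄, D.tree.Adj s t → (D.part s ∩ D.part t).ncard < k

/-- The torso of the part at node `t`: the induced subgraph on `part t`, with edges
added between any two vertices lying in a common adhesion-set at `t`. -/
def torso (D : TreeDecomp G T) (t : T) : SimpleGraph V where
  Adj u v := u ≠ v ∧ u ∈ D.part t ∧ v ∈ D.part t ∧
    (G.Adj u v ∨ ∃ s : T, D.tree.Adj s t ∧ u ∈ D.part s ∧ v ∈ D.part s)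
  symm := by
    constructor
    rintro u v ⟨h1, h2, h3, h4⟩
    refine ⟨h1.symm, h3, h2, ?_⟩
    rcases h4 with h | ⟨s, hs, hu, hv⟩
    · exact Or.inl h.symm
    · exact Or.inr ⟨s, hs, hv, hu⟩
  loopless := ⟨fun u h => h.1 rfl⟩

/-- Degree of `x` in the torso at `t`. -/
noncomputable def torsoDeg (D : TreeDecomp G T) (t : T) (x : V) : ℕ :=
  ((D.torso t).neighborSet x).ncard

/-- The width of a tree-decomposition: `max (|V_t| - 1)`. -/
noncomputable def width [Fintype T] (D : TreeDecomp G T) : ℕ :=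
  Finset.univ.sup fun t : T => (D.part t).ncard - 1

/-- Entry `i` of the fatness tuple: the number of parts of size `n - i`,
where `n = |V(G)|`. -/
noncomputable def fatness [Fintype V] (D : TreeDecomp G T) (i : ℕ) : ℕ :=
  {t : T | (D.part t).ncard = Fintype.card V - i}.ncard

/-- The tree-decomposition is `k`-atomic: it has adhesion `< k` and its fatness is
lexicographically minimum among all tree-decompositions of `G` of adhesion `< k`. -/
def IsAtomic [Fintype V] (D : TreeDecomp G T) (k : ℕ) : Prop :=
  D.AdhesionLT k ∧
  ∀ (T' : Type) (_ : Fintype T') (D' : TreeDecomp G T'), D'.AdhesionLT k →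
    ¬ FatLexLT (Fintype.card V) D'.fatness D.fatness

/-- The tree-decomposition is `k`-lean. -/
def IsLean (D : TreeDecomp G T) (k : ℕ) : Prop :=
  D.AdhesionLT k ∧
  ∀ (s t : T) (A B : Set V), A ⊆ D.part s → B ⊆ D.part t →
    A.ncard = B.ncard → A.ncard ≤ k →
    DisjPaths G A.ncard A B ∨
    ∃ u w : T, D.tree.Adj u w ∧
      (∀ p : D.tree.Path s t, s(u, w) ∈ p.val.edges) ∧
      (D.part u ∩ D.part w).ncard < A.ncard

end TreeDecomp

/-!
Every adhesion-set is a clique in the torsos on both sides, so the degree hypothesis bounds its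
size by `k`. A `(<k+1)`-inseparable set `X` therefore cannot be split by an adhesion-set and lies
in a single part `V_t`. Inside `V_t`, the torso-neighbourhood of a vertex `x` separates `x` from
the rest of `V_t` in `G`; as it cannot separate `x` from the other vertices of `X`, every vertex of
`X` has torso degree at least `k`, and the hypothesis at `t` then forces `|X| ≤ k`.
-/

namespace SimpleGraph

variable {W : Type} {H : SimpleGraph W}

lemma Walk.mem_edges_of_reachable_deleteEdges {a b u v : W} (q : H.Walk u v)
    (hu : (H.deleteEdges {s(a, b)}).Reachable b u)
    (hv : ¬ (H.deleteEdges {s(a, b)}).Reachable b v) : s(a, b) ∈ q.edges := by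
  by_contra hq
  exact hv (hu.trans (reachable_deleteEdges_iff_exists_walk.2 ⟨q, hq⟩))

lemma Walk.exists_adj_reachable_deleteEdges {u v : W} (q : H.Walk u v) (P : W → Prop)
    (hu : ¬ P u) (hv : P v) :
    ∃ a b, H.Adj a b ∧ P a ∧ ¬ P b ∧ (H.deleteEdges {s(a, b)}).Reachable b u := by
  induction q with
  | nil => exact absurd hv hu
  | @cons u w v huw q ih =>
    by_cases hw : P w
    · exact ⟨w, u, huw.symm, hw, hu, .rfl⟩
    obtain ⟨a, b, hab, ha, hb, hbw⟩ := ih hw hv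
    refine ⟨a, b, hab, ha, hb, hbw.trans (Adj.reachable ?_)⟩
    refine deleteEdges_adj.2 ⟨huw.symm, ?_⟩
    rintro h
    rcases Sym2.eq_iff.1 h with ⟨rfl, -⟩ | ⟨-, rfl⟩ <;> contradiction

lemma IsAcyclic.not_reachable_deleteEdges {a b : W} (hH : H.IsAcyclic) (hab : H.Adj a b) :
    ¬ (H.deleteEdges {s(a, b)}).Reachable b a := fun h =>
  isAcyclic_iff_forall_adj_isBridge.1 hH hab h.symm

end SimpleGraph

namespace TreeDecomp

variable {V T : Type} {G : SimpleGraph V} (D : TreeDecomp G T)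

/-- The vertices in parts at nodes on the `b`-side of the tree edge `ab`, that is, in the
component of `b` once `ab` is deleted from the tree. -/
def side (a b : T) : Set V :=
  {v | ∃ u, (D.tree.deleteEdges {s(a, b)}).Reachable b u ∧ v ∈ D.part u}

variable {D}

lemma mem_adhesion_of_mem_side {a b n : T} {v : V} (hv : v ∈ D.side a b)
    (hvn : v ∈ D.part n) (hn : ¬ (D.tree.deleteEdges {s(a, b)}).Reachable b n) :
    v ∈ D.part a ∩ D.part b := by
  classical
  obtain ⟨u, hu, hvu⟩ := hv
  obtain ⟨p⟩ := D.isTree.connected.preconnected u n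
  have hab : s(a, b) ∈ p.toPath.val.edges :=
    p.toPath.val.mem_edges_of_reachable_deleteEdges hu hn
  exact ⟨D.part_path u a n _ (p.toPath.val.fst_mem_support_of_mem_edges hab) ⟨hvu, hvn⟩,
    D.part_path u b n _ (p.toPath.val.snd_mem_support_of_mem_edges hab) ⟨hvu, hvn⟩⟩

lemma mem_part_of_mem_side {a b : T} (hab : D.tree.Adj a b) {v : V} (hv : v ∈ D.side a b)
    (hva : v ∈ D.part a) : v ∈ D.part b :=
  (mem_adhesion_of_mem_side hv hva (D.isTree.isAcyclic.not_reachable_deleteEdges hab)).2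

lemma not_connAvoiding_adhesion {a b : T} {x y : V} (hx : x ∈ D.side a b)
    (hy : y ∉ D.side a b) : ¬ ConnAvoiding G (D.part a ∩ D.part b) x y := by
  rintro ⟨p, hp⟩
  obtain ⟨d, hd, hd₁, hd₂⟩ := p.exists_boundary_dart _ hx hy
  obtain ⟨n, h₁, h₂⟩ := D.part_edge d.adj
  exact hp _ (p.dart_fst_mem_support_of_mem_darts hd)
    (mem_adhesion_of_mem_side hd₁ h₁ fun hn => hd₂ ⟨n, hn, h₂⟩)

lemma torso_adj_of_mem_adhesion {c t : T} (hct : D.tree.Adj c t) {x z : V} (hxz : x ≠ z)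
    (hx : x ∈ D.part c ∩ D.part t) (hz : z ∈ D.part c ∩ D.part t) : (D.torso t).Adj x z :=
  ⟨hxz, hx.2, hz.2, Or.inr ⟨c, hct, hx.1, hz.1⟩⟩

lemma ncard_le_torsoDeg_add_one [Finite V] {t : T} {s : Set V} {x : V} (hx : x ∈ s)
    (hs : ∀ y ∈ s, y ≠ x → (D.torso t).Adj x y) : s.ncard ≤ D.torsoDeg t x + 1 := by
  have hsub : s \ {x} ⊆ (D.torso t).neighborSet x := fun y hy => hs y hy.1 hy.2
  have := Set.ncard_le_ncard hsub (Set.toFinite _)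
  rw [Set.ncard_sdiff_singleton_of_mem hx] at this
  unfold torsoDeg
  omega

lemma not_connAvoiding_torso_neighborSet {t : T} {x y : V} (hx : x ∈ D.part t)
    (hy : y ∈ D.part t) (hxy : x ≠ y) :
    ¬ ConnAvoiding G ((D.torso t).neighborSet x) x y := by
  classical
  rintro ⟨p, hp⟩
  -- Passing to a path ensures that the walk does not return to `x`.
  suffices ∃ z ∈ p.bypass.support, (D.torso t).Adj x z by
    obtain ⟨z, hz, hxz⟩ := this
    exact hp z (p.support_bypass_subset_support hz) hxz
  cases hq : p.bypass with
  | nil => exact absurd rfl hxy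
  | @cons _ w _ hxw q =>
    have hxq : x ∉ q.support := by
      have hpath := p.bypass_isPath
      rw [hq, Walk.cons_isPath_iff] at hpath
      exact hpath.2
    have hwq : w ∈ (Walk.cons hxw q).support := by simp
    by_cases hwt : w ∈ D.part t
    · exact ⟨w, hwq, hxw.ne, hx, hwt, Or.inl hxw⟩
    obtain ⟨u, hxu, hwu⟩ := D.part_edge hxw
    obtain ⟨r⟩ := D.isTree.connected.preconnected u t
    obtain ⟨_, c, hct, rfl, -, hc⟩ :=
      r.exists_adj_reachable_deleteEdges (t = ·) (fun h => hwt (h ▸ hwu)) rfl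
    have hnt := D.isTree.isAcyclic.not_reachable_deleteEdges hct
    have hxc := mem_adhesion_of_mem_side ⟨u, hc, hxu⟩ hx hnt
    have hwc : w ∈ D.side t c := ⟨u, hc, hwu⟩
    by_cases hyc : y ∈ D.side t c
    · exact ⟨y, by simp, torso_adj_of_mem_adhesion hct.symm hxy hxc.symm
        ⟨mem_part_of_mem_side hct hyc hy, hy⟩⟩
    by_contra! hnadj
    refine not_connAvoiding_adhesion hwc hyc ⟨q, fun z hz hzc => ?_⟩
    exact hnadj z (by simp [hz]) (torso_adj_of_mem_adhesion hct.symm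
      (fun h => hxq (h ▸ hz)) hxc.symm hzc.symm)

lemma adhesion_ncard_le [Finite V] {k : ℕ}
    (hD : ∀ t : T, {x : V | x ∈ D.part t ∧ k ≤ D.torsoDeg t x}.ncard ≤ k)
    ⦃a b : T⦄ (hab : D.tree.Adj a b) : (D.part a ∩ D.part b).ncard ≤ k := by
  by_contra! hlt
  have hsub : D.part a ∩ D.part b ⊆ {x : V | x ∈ D.part b ∧ k ≤ D.torsoDeg b x} :=
    fun x hx => ⟨hx.2, by
      have := ncard_le_torsoDeg_add_one (t := b) hx fun y hy hyx =>
        torso_adj_of_mem_adhesion hab (Ne.symm hyx) hx hy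
      omega⟩
  have := Set.ncard_le_ncard hsub (Set.toFinite _)
  have := hD b
  omega

/-- A part containing the most vertices of `X` contains all of them: a vertex of `X` outside it
is cut off by an adhesion-set that either separates two vertices of `X` or lies in a part
containing even more of `X`. -/
lemma exists_subset_part_of_isInseparable {k : ℕ}
    (hadh : ∀ ⦃a b : T⦄, D.tree.Adj a b → (D.part a ∩ D.part b).ncard ≤ k)
    {X : Set V} (hX : IsInseparable G (k + 1) X) : ∃ t, X ⊆ D.part t := by
  have hXpos : 0 < X.ncard := by have := hX.1; omega
  have hXfin : X.Finite := Set.finite_of_ncard_pos hXpos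
  obtain ⟨x₀, -⟩ := (Set.ncard_pos hXfin).1 hXpos
  obtain ⟨t₀, -⟩ := D.part_covers x₀
  have hbdd : BddAbove (Set.range fun t => (X ∩ D.part t).ncard) :=
    ⟨X.ncard, by rintro _ ⟨t, rfl⟩; exact Set.ncard_le_ncard Set.inter_subset_left hXfin⟩
  obtain ⟨t, ht : (X ∩ D.part t).ncard = _⟩ :=
    Nat.sSup_mem (Set.range_nonempty_iff_nonempty.2 ⟨t₀⟩) hbdd
  have htmax : ∀ s, (X ∩ D.part s).ncard ≤ (X ∩ D.part t).ncard := fun s =>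
    ht ▸ le_csSup hbdd ⟨s, rfl⟩
  refine ⟨t, fun x hx => ?_⟩
  by_contra hxt
  obtain ⟨s, hxs⟩ := D.part_covers x
  obtain ⟨r⟩ := D.isTree.connected.preconnected t s
  obtain ⟨a, b, hab, hxa, hxb, hbt⟩ :=
    r.exists_adj_reachable_deleteEdges (x ∈ D.part ·) hxt hxs
  have hxside : x ∉ D.side a b := fun h => hxb (mem_part_of_mem_side hab h hxa)
  by_cases hy : ∃ y ∈ X ∩ D.part t, y ∉ D.part a ∩ D.part b
  · obtain ⟨y, ⟨hyX, hyt⟩, hyab⟩ := hy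
    exact not_connAvoiding_adhesion ⟨t, hbt, hyt⟩ hxside <|
      hX.2 y hyX x hx (fun h => hxt (h ▸ hyt)) _ (Nat.lt_succ_of_le (hadh hab)) hyab
        fun h => hxb h.2
  push Not at hy
  have hsub : insert x (X ∩ D.part t) ⊆ X ∩ D.part a := by
    rintro z (rfl | hz)
    exacts [⟨hx, hxa⟩, ⟨hz.1, (hy z hz).1⟩]
  have := Set.ncard_le_ncard hsub (hXfin.subset Set.inter_subset_left)
  rw [Set.ncard_insert_of_notMem (fun h => hxt h.2) (hXfin.subset Set.inter_subset_left)] at this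
  have := htmax a
  omega

lemma le_torsoDeg_of_isInseparable [Finite V] {k : ℕ} {X : Set V}
    (hX : IsInseparable G (k + 1) X) {t : T} (hXt : X ⊆ D.part t) {x : V} (hx : x ∈ X) :
    k ≤ D.torsoDeg t x := by
  by_contra! hlt
  by_cases hy : ∃ y ∈ X, y ≠ x ∧ ¬ (D.torso t).Adj x y
  · obtain ⟨y, hyX, hyx, hxy⟩ := hy
    exact not_connAvoiding_torso_neighborSet (hXt hx) (hXt hyX) hyx.symm <|
      hX.2 x hx y hyX hyx.symm _ (by unfold torsoDeg at hlt; omega)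
        ((D.torso t).loopless.irrefl x) hxy
  push Not at hy
  have := ncard_le_torsoDeg_add_one hx hy
  have := hX.1
  omega

end TreeDecomp

theorem stmt_1_general {V T : Type} [Fintype V] (G : SimpleGraph V) (k : ℕ)
    (D : TreeDecomp G T)
    (hD : ∀ t : T, {x : V | x ∈ D.part t ∧ k ≤ D.torsoDeg t x}.ncard ≤ k) :
    ¬ ∃ X : Set V, IsBlock G (k + 1) X := by
  rintro ⟨X, hX, -⟩
  obtain ⟨t, hXt⟩ := D.exists_subset_part_of_isInseparable (D.adhesion_ncard_le hD) hX
  have hsub : X ⊆ {x : V | x ∈ D.part t ∧ k ≤ D.torsoDeg t x} := fun x hx =>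
    ⟨hXt hx, D.le_torsoDeg_of_isInseparable hX hXt hx⟩
  have := Set.ncard_le_ncard hsub (Set.toFinite _)
  have := hD t
  have := hX.1
  omega

/-- If `G` has a tree-decomposition in which every torso has at most `k`
vertices of degree at least `k` (`k ≥ 2`), then `G` has no `(k+1)`-block. -/
theorem stmt_1 {V T : Type} [Fintype V] [Fintype T] (G : SimpleGraph V) (k : ℕ)
    (hk : 2 ≤ k) (D : TreeDecomp G T)
    (hD : ∀ t : T, {x : V | x ∈ D.part t ∧ k ≤ D.torsoDeg t x}.ncard ≤ k) :
    ¬ ∃ X : Set V, IsBlock G (k + 1) X :=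
  stmt_1_general G k D hD
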